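/- (Generating function for the i-th family of generalized Gould–Hopper polynomials.) Fix integers d ≥ 0, l ≥ 1, i with 0 ≤ i ≤ l−1, and complex parameters α_1,…,α_d; assume no element of Ŝ(i) is a nonpositive integer. Define the polynomials Q_{ml+i}(x) = x^i · Σ_{j=0}^m [(−m)_j / (∏_{β∈I} (S_β(i))_j · j!)] · (−x^l)^j for m ≥ 0. Then the following identity of formal power series in t with coefficients in ℂ[x] holds: Σ_{m=0}^∞ Q_{ml+i}(x) · t^{ml+i}/m! = (xt)^i · (Σ_{s=0}^∞ t^{ls}/s!) · (Σ_{j=0}^∞ (xt)^{lj} / (∏_{β∈I} (S_β(i))_j · j!)). Equivalently, Φ_i(x,t) = (tx)^i e^{t^l} · 0F_{ld+l−1}(—; Ŝ(i); (xt)^l) generates the family {Q_{ml+i}}. -/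

import Mathlib

/-! Since `(−m)_j (−1)^j = m!/(m−j)!`, the exponential generating series
`Σ_m Q_{ml+i}(x) u^m/m!` is `x^i` times the Cauchy product of `e^u` with
`Σ_j x^{lj} u^j/(∏_β (S_β(i))_j j!)`. Substituting `u = t^l` (`PowerSeries.expand`, a ring
homomorphism) and multiplying by `t^i` gives the identity. -/

open Polynomial

/-- Pochhammer symbol `(a)_j = a(a+1)⋯(a+j−1)`. -/
noncomputable def poch (a : ℂ) (j : ℕ) : ℂ := ∏ s ∈ Finset.range j, (a + s)

theorem poch_eq_eval_ascPochhammer (a : ℂ) (j : ℕ) :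
    poch a j = (ascPochhammer ℂ j).eval a := by
  induction j with
  | zero => simp [poch]
  | succ j ih => rw [poch, Finset.prod_range_succ, ← poch, ih, ascPochhammer_succ_eval]

theorem poch_neg_natCast_mul_neg_one_pow (m j : ℕ) :
    poch (-(m : ℂ)) j * (-1) ^ j = m.descFactorial j := by
  rw [poch_eq_eval_ascPochhammer, ascPochhammer_eval_neg_eq_descPochhammer,
    descPochhammer_eval_eq_descFactorial, mul_right_comm, ← mul_pow]
  simp

theorem inv_factorial_mul_descFactorial {K : Type*} [Field K] [CharZero K] {m j : ℕ}
    (hj : j ≤ m) : (m.factorial : K)⁻¹ * m.descFactorial j = ((m - j).factorial : K)⁻¹ := by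
  have hdesc : (m.descFactorial j : K) ≠ 0 :=
    Nat.cast_ne_zero.mpr (Nat.descFactorial_eq_zero_iff_lt.not.mpr hj.not_gt)
  rw [← Nat.factorial_mul_descFactorial hj, Nat.cast_mul, mul_inv, mul_assoc,
    inv_mul_cancel₀ hdesc, mul_one]

theorem PowerSeries.X_pow_mul_expand {R : Type*} [CommRing R] {l i : ℕ} (hl : l ≠ 0)
    (hi : i < l) (f : PowerSeries R) :
    PowerSeries.X ^ i * PowerSeries.expand l hl f =
      PowerSeries.mk fun N => if N % l = i then PowerSeries.coeff (N / l) f else 0 := by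
  ext N
  rw [PowerSeries.coeff_X_pow_mul', PowerSeries.coeff_mk]
  by_cases hN : N % l = i
  · have hdiv : N - i = l * (N / l) := by have := Nat.div_add_mod N l; omega
    rw [if_pos (hN ▸ Nat.mod_le N l), hdiv, PowerSeries.coeff_expand_mul, if_pos hN]
  · rw [if_neg hN]
    split_ifs with hiN
    · refine PowerSeries.coeff_expand_of_not_dvd l hl f fun ⟨k, hk⟩ => hN ?_
      rw [show N = i + l * k by omega, Nat.add_mul_mod_self_left, Nat.mod_eq_of_lt hi]
    · rfl

theorem PowerSeries.expand_eq_mk {R : Type*} [CommRing R] {l : ℕ} (hl : l ≠ 0)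
    (f : PowerSeries R) :
    PowerSeries.expand l hl f =
      PowerSeries.mk fun N => if N % l = 0 then PowerSeries.coeff (N / l) f else 0 := by
  simpa using PowerSeries.X_pow_mul_expand hl (Nat.pos_of_ne_zero hl) f

/-- `Q_{ml+i}`, with `P j` standing for `∏_{β∈I} (S_β(i))_j`. -/
noncomputable def gouldHopper (P : ℕ → ℂ) (l i m : ℕ) : ℂ[X] :=
  X ^ i * ∑ j ∈ Finset.range (m + 1),
    ((poch (-(m : ℂ)) j * (-1 : ℂ) ^ j) / (P j * (j.factorial : ℂ))) • X ^ (l * j)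

theorem mk_inv_factorial_smul_gouldHopper (P : ℕ → ℂ) (l i : ℕ) :
    PowerSeries.mk (fun m => (m.factorial : ℂ)⁻¹ • gouldHopper P l i m) =
      PowerSeries.C (X ^ i) * ((PowerSeries.mk fun s => C (s.factorial : ℂ)⁻¹) *
        PowerSeries.mk fun j => (P j * j.factorial)⁻¹ • (X : ℂ[X]) ^ (l * j)) := by
  refine PowerSeries.ext fun m => ?_
  rw [PowerSeries.coeff_mk, PowerSeries.coeff_C_mul, PowerSeries.coeff_mul,
    ← Finset.Nat.sum_antidiagonal_swap]
  simp only [Prod.fst_swap, Prod.snd_swap, PowerSeries.coeff_mk]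
  rw [Finset.Nat.sum_antidiagonal_eq_sum_range_succ (fun j k : ℕ => C (k.factorial : ℂ)⁻¹ *
      ((P j * j.factorial)⁻¹ • (X : ℂ[X]) ^ (l * j))),
    gouldHopper, Finset.mul_sum, Finset.mul_sum, Finset.smul_sum]
  refine Finset.sum_congr rfl fun j hj => ?_
  have hcoeff :
      (m.factorial : ℂ)⁻¹ * ((poch (-(m : ℂ)) j * (-1) ^ j) / (P j * j.factorial)) =
        ((m - j).factorial : ℂ)⁻¹ * (P j * j.factorial)⁻¹ := by
    rw [poch_neg_natCast_mul_neg_one_pow, div_eq_mul_inv, ← mul_assoc,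
      inv_factorial_mul_descFactorial (Finset.mem_range_succ_iff.mp hj)]
  simp only [smul_eq_C_mul]
  rw [mul_left_comm, ← mul_assoc (C _), ← map_mul, hcoeff, map_mul, mul_assoc]

theorem stmt17 (d : ℕ) (α : ℕ → ℂ) (l : ℕ) (hl : 1 ≤ l) (i : ℕ) (hi : i < l) :
    let A : ℕ → ℂ := fun k => if k < d then α k else 0
    let S : ℕ × ℕ → ℂ := fun kr => (A kr.1 + i - kr.2) / (l : ℂ) + 1
    let Ihat : Finset (ℕ × ℕ) := (Finset.range (d + 1) ×ˢ Finset.range l).erase (d, i)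
    -- `Q_{ml+i}(x) = x^i Σ_{j=0}^m (−m)_j/(∏_{β∈I}(S_β(i))_j j!) (−x^l)^j`
    let Q : ℕ → Polynomial ℂ := fun m =>
      Polynomial.X ^ i * ∑ j ∈ Finset.range (m + 1),
        ((poch (-(m : ℂ)) j * (-1 : ℂ) ^ j)
            / ((∏ kr ∈ Ihat, poch (S kr) j) * (j.factorial : ℂ)))
          • Polynomial.X ^ (l * j)
    (∀ kr ∈ Ihat, ∀ s : ℕ, S kr ≠ -(s : ℂ)) →
    -- LHS: `Σ_{m=0}^∞ Q_{ml+i}(x) t^{ml+i}/m!`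
    (PowerSeries.mk fun N : ℕ =>
        if N % l = i then (((N / l).factorial : ℂ))⁻¹ • Q (N / l) else 0)
      -- `(xt)^i`
      = (PowerSeries.C (R := Polynomial ℂ) Polynomial.X * PowerSeries.X) ^ i
        -- `e^{t^l} = Σ_s t^{ls}/s!`
        * (PowerSeries.mk fun N : ℕ =>
            if N % l = 0 then Polynomial.C ((((N / l).factorial : ℂ))⁻¹) else 0)
        -- `Σ_j (xt)^{lj}/(∏_{β∈I}(S_β(i))_j j!)`
        * (PowerSeries.mk fun N : ℕ =>
            if N % l = 0 then
              (((∏ kr ∈ Ihat, poch (S kr) (N / l)) * (((N / l).factorial : ℂ)))⁻¹)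
                • Polynomial.X ^ N
            else 0) := by
  intro A S Ihat Q _
  set P : ℕ → ℂ := fun j => ∏ kr ∈ Ihat, poch (S kr) j
  have hl0 : l ≠ 0 := by omega
  have hLHS : (PowerSeries.mk fun N : ℕ =>
      if N % l = i then (((N / l).factorial : ℂ))⁻¹ • Q (N / l) else 0) =
      PowerSeries.X ^ i * PowerSeries.expand l hl0
        (PowerSeries.mk fun m => (m.factorial : ℂ)⁻¹ • gouldHopper P l i m) := by
    simp only [PowerSeries.X_pow_mul_expand hl0 hi, PowerSeries.coeff_mk]
    rfl
  have hexp : (PowerSeries.mk fun N : ℕ =>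
      if N % l = 0 then Polynomial.C ((((N / l).factorial : ℂ))⁻¹) else 0) =
      PowerSeries.expand l hl0 (PowerSeries.mk fun s => C (s.factorial : ℂ)⁻¹) := by
    rw [PowerSeries.expand_eq_mk]
    simp only [PowerSeries.coeff_mk]
  have hhyper : (PowerSeries.mk fun N : ℕ => if N % l = 0 then
      ((P (N / l) * (((N / l).factorial : ℂ)))⁻¹) • Polynomial.X ^ N else 0) =
      PowerSeries.expand l hl0
        (PowerSeries.mk fun j => (P j * j.factorial)⁻¹ • (X : ℂ[X]) ^ (l * j)) := by
    rw [PowerSeries.expand_eq_mk]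
    congr! 3 with N h
    rw [PowerSeries.coeff_mk, Nat.mul_div_cancel' (Nat.dvd_of_mod_eq_zero h)]
  rw [hLHS, hexp, hhyper, mul_pow, ← map_pow, mk_inv_factorial_smul_gouldHopper, map_mul, map_mul,
    PowerSeries.expand_C]
  ring
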